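/- The undirected open-optional normal self-closing door can simulate the directed open-optional normal self-closing door. In particular, two undirected open-optional normal self-closing doors wired in series (each door's opening port accessible only from the entering side, as in the construction) simulate a diode, and wiring a diode to each side of the self-closing tunnel makes that tunnel directed. -/

import Mathlib

/-- A 1-player gadget: a finite set of states, a finite set of locations,
and a set of traversals between state–location pairs. -/
structure Gadget where
  State : Type
  Loc : Type
  stateFin : Fintype State
  locFin : Fintype Loc
  trav : (State × Loc) → (State × Loc) → Prop

open Classical in
/-- Update the state of one gadget instance in a global state. -/
noncomputable def updState {ι St : Type} (σg : ι → St) (i : ι) (s : St) : ι → St :=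
  fun j => if j = i then s else σg j

/-- A system of copies of the gadget `G`: a finite collection of instances together with
symmetric connections (pairings of locations) along which the agent moves freely. -/
structure System (G : Gadget) where
  ι : Type
  instFin : Fintype ι
  conn : (ι × G.Loc) → (ι × G.Loc) → Prop
  conn_symm : ∀ x y, conn x y → conn y x

/-- A single move of the agent in a system: a traversal inside one instance
(changing only that instance's state), or a free move along a connection. -/
inductive SysStep (G : Gadget) (S : System G) :
    ((S.ι → G.State) × (S.ι × G.Loc)) → ((S.ι → G.State) × (S.ι × G.Loc)) → Prop
  | trav {σg : S.ι → G.State} {i : S.ι} {a b : G.Loc} {s' : G.State} :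
      G.trav (σg i, a) (s', b) →
      SysStep G S (σg, (i, a)) (updState σg i s', (i, b))
  | move {σg : S.ι → G.State} {x y : S.ι × G.Loc} :
      S.conn x y → SysStep G S (σg, x) (σg, y)

/-- `Simulates G' G` : there is a system of copies of `G'`, with external locations
identified (injectively) with the locations of `G` and an injective encoding of the
states of `G` as global states, whose reachability behavior between external locations
in encoded global states is exactly the transitive closure of `G`. -/
def Simulates (G' G : Gadget) : Prop :=
  ∃ S : System G', ∃ ext : G.Loc → S.ι × G'.Loc, ∃ enc : G.State → (S.ι → G'.State),
    Function.Injective ext ∧ Function.Injective enc ∧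
    ∀ s s' a b,
      Relation.ReflTransGen (SysStep G' S) (enc s, ext a) (enc s', ext b) ↔
      Relation.ReflTransGen G.trav (s, a) (s', b)

/-! ### Doors.  State `true` = open, `false` = closed.
A direction flag `true` means the corresponding tunnel is directed,
`false` that it is undirected. -/

/-- Locations of a door with an opening tunnel: entrance/exit of the opening (`O`),
traverse (`T`) and closing (`C`) tunnels. -/
inductive DoorLoc | O0 | O1 | T0 | T1 | C0 | C1
deriving DecidableEq

instance : Fintype DoorLoc :=
  ⟨{DoorLoc.O0, DoorLoc.O1, DoorLoc.T0, DoorLoc.T1, DoorLoc.C0, DoorLoc.C1}, fun x => by cases x <;> simp⟩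

/-- Traversals of a door with an opening tunnel; `dO`, `dT`, `dC` record whether the
opening, traverse, closing tunnels are directed. -/
def doorTrav (dO dT dC : Bool) : (Bool × DoorLoc) → (Bool × DoorLoc) → Prop := fun x y =>
  (x.2 = DoorLoc.O0 ∧ y = (true, DoorLoc.O1)) ∨
  (dO = false ∧ x.2 = DoorLoc.O1 ∧ y = (true, DoorLoc.O0)) ∨
  (x.1 = true ∧ x.2 = DoorLoc.T0 ∧ y = (true, DoorLoc.T1)) ∨
  (dT = false ∧ x.1 = true ∧ x.2 = DoorLoc.T1 ∧ y = (true, DoorLoc.T0)) ∨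
  (x.2 = DoorLoc.C0 ∧ y = (false, DoorLoc.C1)) ∨
  (dC = false ∧ x.2 = DoorLoc.C1 ∧ y = (false, DoorLoc.C0))

/-- The door with an opening tunnel (an open-required door). -/
def doorGadget (dO dT dC : Bool) : Gadget :=
  ⟨Bool, DoorLoc, inferInstance, inferInstance, doorTrav dO dT dC⟩

/-- Locations of an open-optional door: opening port `O` plus traverse and closing tunnels. -/
inductive ODoorLoc | O | T0 | T1 | C0 | C1
deriving DecidableEq

instance : Fintype ODoorLoc :=
  ⟨{ODoorLoc.O, ODoorLoc.T0, ODoorLoc.T1, ODoorLoc.C0, ODoorLoc.C1}, fun x => by cases x <;> simp⟩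

/-- Traversals of an open-optional door: a visit to the opening port `O` sets the state
to open; `dT`, `dC` record whether the traverse and closing tunnels are directed. -/
def openOptDoorTrav (dT dC : Bool) : (Bool × ODoorLoc) → (Bool × ODoorLoc) → Prop := fun x y =>
  (x.2 = ODoorLoc.O ∧ y = (true, ODoorLoc.O)) ∨
  (x.1 = true ∧ x.2 = ODoorLoc.T0 ∧ y = (true, ODoorLoc.T1)) ∨
  (dT = false ∧ x.1 = true ∧ x.2 = ODoorLoc.T1 ∧ y = (true, ODoorLoc.T0)) ∨
  (x.2 = ODoorLoc.C0 ∧ y = (false, ODoorLoc.C1)) ∨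
  (dC = false ∧ x.2 = ODoorLoc.C1 ∧ y = (false, ODoorLoc.C0))

/-- The open-optional door. -/
def openOptDoorGadget (dT dC : Bool) : Gadget :=
  ⟨Bool, ODoorLoc, inferInstance, inferInstance, openOptDoorTrav dT dC⟩

/-- A diode: a 1-state gadget with one always-traversable directed tunnel. -/
inductive DiodeLoc | inp | out
deriving DecidableEq

instance : Fintype DiodeLoc :=
  ⟨{DiodeLoc.inp, DiodeLoc.out}, fun x => by cases x <;> simp⟩

def diode : Gadget :=
  ⟨Unit, DiodeLoc, inferInstance, inferInstance,
    fun x y => x.2 = DiodeLoc.inp ∧ y.2 = DiodeLoc.out⟩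

/-- Locations of an open-required normal self-closing door. -/
inductive SCDLoc | O0 | O1 | T0 | T1
deriving DecidableEq

instance : Fintype SCDLoc :=
  ⟨{SCDLoc.O0, SCDLoc.O1, SCDLoc.T0, SCDLoc.T1}, fun x => by cases x <;> simp⟩

/-- Open-required normal self-closing door: opening tunnel `O` (always traversable, sets
the state to open), self-closing tunnel `T` (traversable exactly when open, sets closed). -/
def nSCDTrav (dO dT : Bool) : (Bool × SCDLoc) → (Bool × SCDLoc) → Prop := fun x y =>
  (x.2 = SCDLoc.O0 ∧ y = (true, SCDLoc.O1)) ∨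
  (dO = false ∧ x.2 = SCDLoc.O1 ∧ y = (true, SCDLoc.O0)) ∨
  (x.1 = true ∧ x.2 = SCDLoc.T0 ∧ y = (false, SCDLoc.T1)) ∨
  (dT = false ∧ x.1 = true ∧ x.2 = SCDLoc.T1 ∧ y = (false, SCDLoc.T0))

def nSCD (dO dT : Bool) : Gadget :=
  ⟨Bool, SCDLoc, inferInstance, inferInstance, nSCDTrav dO dT⟩

/-- Locations of an open-optional normal self-closing door. -/
inductive OOSCDLoc | O | T0 | T1
deriving DecidableEq

instance : Fintype OOSCDLoc :=
  ⟨{OOSCDLoc.O, OOSCDLoc.T0, OOSCDLoc.T1}, fun x => by cases x <;> simp⟩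

/-- Open-optional normal self-closing door: opening port `O` (visit sets the state to
open), self-closing tunnel `T` (traversable exactly when open, sets the state closed). -/
def ooSCDTrav (dT : Bool) : (Bool × OOSCDLoc) → (Bool × OOSCDLoc) → Prop := fun x y =>
  (x.2 = OOSCDLoc.O ∧ y = (true, OOSCDLoc.O)) ∨
  (x.1 = true ∧ x.2 = OOSCDLoc.T0 ∧ y = (false, OOSCDLoc.T1)) ∨
  (dT = false ∧ x.1 = true ∧ x.2 = OOSCDLoc.T1 ∧ y = (false, OOSCDLoc.T0))

def ooSCD (dT : Bool) : Gadget :=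
  ⟨Bool, OOSCDLoc, inferInstance, inferInstance, ooSCDTrav dT⟩

/-- Locations of a symmetric self-closing door. -/
inductive SymSCDLoc | A0 | A1 | B0 | B1
deriving DecidableEq

instance : Fintype SymSCDLoc :=
  ⟨{SymSCDLoc.A0, SymSCDLoc.A1, SymSCDLoc.B0, SymSCDLoc.B1}, fun x => by cases x <;> simp⟩

/-- Symmetric self-closing door: self-opening tunnel `A` (traversable exactly when closed,
sets the state open), self-closing tunnel `B` (traversable exactly when open, sets closed). -/
def symSCDTrav (dA dB : Bool) : (Bool × SymSCDLoc) → (Bool × SymSCDLoc) → Prop := fun x y =>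
  (x.1 = false ∧ x.2 = SymSCDLoc.A0 ∧ y = (true, SymSCDLoc.A1)) ∨
  (dA = false ∧ x.1 = false ∧ x.2 = SymSCDLoc.A1 ∧ y = (true, SymSCDLoc.A0)) ∨
  (x.1 = true ∧ x.2 = SymSCDLoc.B0 ∧ y = (false, SymSCDLoc.B1)) ∨
  (dB = false ∧ x.1 = true ∧ x.2 = SymSCDLoc.B1 ∧ y = (false, SymSCDLoc.B0))

def symSCD (dA dB : Bool) : Gadget :=
  ⟨Bool, SymSCDLoc, inferInstance, inferInstance, symSCDTrav dA dB⟩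

/-!
Two closed undirected doors `i`, `j` in series act as a diode when the entrance of door `i` is
wired to its own opening port and the exit of door `i` to both the opening port and the entrance
of door `j`. Going forward one opens `i`, crosses it (which closes it), opens `j` and crosses it,
leaving both doors closed again. Going backward is impossible: the door just crossed is closed,
and its opening port can only be reached from its entrance side. A diode on each side of the
self-closing tunnel of an undirected door makes that tunnel one-way, while the opening port
stays external.

Soundness of both constructions is an invariant that describes the configurations reachable
from each external start. It is checked exhaustively by `decide`.
-/

open Relation Function

lemma updState_eq_update {ι St : Type} [DecidableEq ι] (σ : ι → St) (i : ι) (s : St) :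
    updState σ i s = update σ i s := by
  funext j
  simp only [updState, update_apply]
  congr

abbrev System.ofWires (G : Gadget) (ι : Type) [Fintype ι]
    (wires : List ((ι × G.Loc) × (ι × G.Loc))) : System G where
  ι := ι
  instFin := inferInstance
  conn x y := (x, y) ∈ wires ∨ (y, x) ∈ wires
  conn_symm _ _ := Or.symm

namespace SysStep

variable {G : Gadget} {S : System G} [DecidableEq S.ι]

lemma trav_update {σ : S.ι → G.State} {i : S.ι} {a b : G.Loc} {s' : G.State}
    (h : G.trav (σ i, a) (s', b)) : SysStep G S (σ, (i, a)) (update σ i s', (i, b)) := by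
  rw [← updState_eq_update]
  exact .trav h

lemma preserves {P : (S.ι → G.State) → S.ι × G.Loc → Prop}
    (htrav : ∀ σ i a s' b, P σ (i, a) → G.trav (σ i, a) (s', b) → P (update σ i s') (i, b))
    (hmove : ∀ σ x y, P σ x → S.conn x y → P σ y)
    {c c' : (S.ι → G.State) × (S.ι × G.Loc)} (hc : P c.1 c.2) (h : SysStep G S c c') :
    P c'.1 c'.2 := by
  cases h with
  | trav h => rw [updState_eq_update]; exact htrav _ _ _ _ _ hc h
  | move h => exact hmove _ _ _ hc h

end SysStep

lemma Relation.ReflTransGen.of_invariant {α : Type*} {r : α → α → Prop} {P : α → Prop}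
    (hP : ∀ x y, P x → r x y → P y) {a b : α} (h : ReflTransGen r a b) (ha : P a) : P b := by
  induction h with
  | refl => exact ha
  | tail _ hr ih => exact hP _ _ ih hr

theorem Simulates.of_invariant {G' G : Gadget} (S : System G') [DecidableEq S.ι]
    (ext : G.Loc → S.ι × G'.Loc) (enc : G.State → (S.ι → G'.State))
    (hext : Injective ext) (henc : Injective enc)
    (Inv : G.State → G.Loc → (S.ι → G'.State) → S.ι × G'.Loc → Prop)
    (init : ∀ s a, Inv s a (enc s) (ext a))
    (trav_closed : ∀ s a σ i l t l', Inv s a σ (i, l) → G'.trav (σ i, l) (t, l') →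
      Inv s a (update σ i t) (i, l'))
    (move_closed : ∀ s a σ x y, Inv s a σ x → S.conn x y → Inv s a σ y)
    (sound : ∀ s a s' b, Inv s a (enc s') (ext b) → (s, a) = (s', b) ∨ G.trav (s, a) (s', b))
    (complete : ∀ s a s' b, G.trav (s, a) (s', b) →
      ReflTransGen (SysStep G' S) (enc s, ext a) (enc s', ext b)) :
    Simulates G' G := by
  refine ⟨S, ext, enc, hext, henc, fun s s' a b => ⟨fun h => ?_, fun h => ?_⟩⟩
  · have reachable_inv := h.of_invariant (P := fun c => Inv s a c.1 c.2)
      (fun _ _ => SysStep.preserves (trav_closed s a) (move_closed s a)) (init s a)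
    rcases sound s a s' b reachable_inv with heq | ht
    · rw [heq]
    · exact .single ht
  · exact ReflTransGen.lift' (fun x : G.State × G.Loc => (enc x.1, ext x.2))
      (fun _ _ => complete _ _ _ _) _ _ h

instance (d : Bool) (x y : Bool × OOSCDLoc) : Decidable (ooSCDTrav d x y) := by
  unfold ooSCDTrav; infer_instance

open OOSCDLoc

section Paths

variable {S : System (ooSCD false)} [DecidableEq S.ι] {σ : S.ι → Bool}

lemma reach_open_door {x : S.ι × OOSCDLoc} {j : S.ι} (h : S.conn x (j, O)) :
    ReflTransGen (SysStep _ S) (σ, x) (update σ j true, x) :=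
  .head (.move h) <| .head (SysStep.trav_update (Or.inl ⟨rfl, rfl⟩)) <|
    .single (.move (S.conn_symm _ _ h))

lemma sysStep_cross_door {j : S.ι} {σ' : S.ι → Bool} (h : σ j = true)
    (h' : update σ j false = σ') : SysStep _ S (σ, (j, T0)) (σ', (j, T1)) := by
  subst h'
  exact SysStep.trav_update (Or.inr (Or.inl ⟨h, rfl, rfl⟩))

lemma reach_through_diode {i j : S.ι} (hi : σ i = false) (hj : σ j = false)
    (hii : S.conn (i, T0) (i, O)) (hij : S.conn (i, T1) (j, O)) (hij' : S.conn (i, T1) (j, T0)) :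
    ReflTransGen (SysStep _ S) (σ, (i, T0)) (σ, (j, T1)) := by
  have reclose : ∀ k, σ k = false → update (update σ k true) k false = σ := fun k hk =>
    (update_idem _ _ σ).trans ((congrArg (update σ k) hk.symm).trans (update_eq_self k σ))
  exact (reach_open_door hii).trans <|
    .head (sysStep_cross_door (update_self i true σ) (reclose i hi)) <|
    (reach_open_door hij).trans <| .head (.move hij') <|
    .single (sysStep_cross_door (update_self j true σ) (reclose j hj))

end Paths

def diodeWires {ι : Type} (i j : ι) : List ((ι × OOSCDLoc) × (ι × OOSCDLoc)) :=
  [((i, T0), (i, O)), ((i, T1), (j, O)), ((i, T1), (j, T0))]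

lemma reach_through_diodeWires {ι : Type} [Fintype ι] [DecidableEq ι]
    {wires : List ((ι × OOSCDLoc) × (ι × OOSCDLoc))} {σ : ι → Bool} {i j : ι}
    (h : diodeWires i j ⊆ wires) (hi : σ i = false) (hj : σ j = false) :
    ReflTransGen (SysStep _ (System.ofWires (ooSCD false) ι wires))
      (σ, (i, T0)) (σ, (j, T1)) := by
  simp only [diodeWires, List.cons_subset, List.nil_subset, and_true] at h
  obtain ⟨hii, hij, hij'⟩ := h
  exact reach_through_diode hi hj (.inl hii) (.inl hij) (.inl hij')

def doorPairExt : DiodeLoc → Fin 2 × OOSCDLoc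
  | .inp => (0, T0)
  | .out => (1, T1)

-- The configurations reachable from the external location `a` with both doors closed.
def doorPairInv : DiodeLoc → (Fin 2 → Bool) → Fin 2 × OOSCDLoc → Prop
  | .inp, σ, p =>
      (p ∈ [(0, T0), (0, O)] ∧ σ 1 = false) ∨
      (p ∈ [(0, T1), (1, O), (1, T0)] ∧ σ 0 = false) ∨
      (p = (1, T1) ∧ σ = ![false, false])
  | .out, σ, p => p = (1, T1) ∧ σ = ![false, false]

instance (a : DiodeLoc) (σ : Fin 2 → Bool) (p : Fin 2 × OOSCDLoc) :
    Decidable (doorPairInv a σ p) := by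
  cases a <;> unfold doorPairInv <;> infer_instance

lemma doorPairExt_injective : Injective doorPairExt := by
  unfold Injective; decide

lemma doorPairInv_init : ∀ a, doorPairInv a ![false, false] (doorPairExt a) := by
  decide

lemma doorPairInv_trav : ∀ a σ (i : Fin 2) l t l', doorPairInv a σ (i, l) →
    ooSCDTrav false (σ i, l) (t, l') → doorPairInv a (update σ i t) (i, l') := by
  decide

lemma doorPairInv_move : ∀ a σ (x y : Fin 2 × OOSCDLoc), doorPairInv a σ x →
    (x, y) ∈ diodeWires 0 1 ∨ (y, x) ∈ diodeWires 0 1 → doorPairInv a σ y := by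
  decide

lemma doorPairInv_sound : ∀ a b, doorPairInv a ![false, false] (doorPairExt b) →
    a = b ∨ a = .inp ∧ b = .out := by
  decide

lemma undirected_ooSCD_simulates_diode : Simulates (ooSCD false) diode := by
  refine Simulates.of_invariant (System.ofWires (ooSCD false) (Fin 2) (diodeWires 0 1))
    doorPairExt (fun _ => ![false, false]) doorPairExt_injective (fun _ _ _ => rfl)
    (fun _ => doorPairInv) (fun _ => doorPairInv_init) (fun _ => doorPairInv_trav)
    (fun _ => doorPairInv_move) ?_ ?_
  · intro _ a _ b h
    rcases doorPairInv_sound a b h with rfl | h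
    exacts [.inl rfl, .inr h]
  · rintro _ a _ b ⟨ha, hb⟩
    cases ha; cases hb
    exact reach_through_diodeWires (List.Subset.refl _) rfl rfl

def diodeDoorDiodeWires : List ((Fin 5 × OOSCDLoc) × (Fin 5 × OOSCDLoc)) :=
  diodeWires 0 1 ++ [((1, T1), (2, T0)), ((2, T1), (3, T0))] ++ diodeWires 3 4

def diodeDoorDiodeExt : OOSCDLoc → Fin 5 × OOSCDLoc
  | O => (2, O)
  | T0 => (0, T0)
  | T1 => (4, T1)

def diodeDoorDiodeEnc (s : Bool) : Fin 5 → Bool := ![false, false, s, false, false]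

-- The configurations reachable from the external location `a` with the middle door in state `s`
-- and the four diode doors closed.
def diodeDoorDiodeInv (s : Bool) : OOSCDLoc → (Fin 5 → Bool) → Fin 5 × OOSCDLoc → Prop
  | O, σ, p => p = (2, O) ∧ (σ = diodeDoorDiodeEnc s ∨ σ = diodeDoorDiodeEnc true)
  | T0, σ, p =>
      (p ∈ [(0, T0), (0, O)] ∧ ∃ d, σ = ![d, false, s, false, false]) ∨
      (p ∈ [(0, T1), (1, O), (1, T0)] ∧ ∃ d, σ = ![false, d, s, false, false]) ∨
      (p ∈ [(1, T1), (2, T0)] ∧ σ = diodeDoorDiodeEnc s) ∨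
      (s = true ∧ p ∈ [(2, T1), (3, T0), (3, O)] ∧ ∃ d, σ = ![false, false, false, d, false]) ∨
      (s = true ∧ p ∈ [(3, T1), (4, O), (4, T0)] ∧ ∃ d, σ = ![false, false, false, false, d]) ∨
      (s = true ∧ p = (4, T1) ∧ σ = diodeDoorDiodeEnc false)
  | T1, σ, p => p = (4, T1) ∧ σ = diodeDoorDiodeEnc s

instance (s : Bool) (a : OOSCDLoc) (σ : Fin 5 → Bool) (p : Fin 5 × OOSCDLoc) :
    Decidable (diodeDoorDiodeInv s a σ p) := by
  cases a <;> unfold diodeDoorDiodeInv <;> infer_instance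

lemma diodeDoorDiodeExt_injective : Injective diodeDoorDiodeExt := by
  unfold Injective; decide

lemma diodeDoorDiodeEnc_injective : Injective diodeDoorDiodeEnc :=
  fun _ _ h => congrFun h 2

lemma update_diodeDoorDiodeEnc (s t : Bool) :
    update (diodeDoorDiodeEnc s) 2 t = diodeDoorDiodeEnc t := by
  decide +revert

lemma diodeDoorDiodeInv_init : ∀ s a, diodeDoorDiodeInv s a (diodeDoorDiodeEnc s)
    (diodeDoorDiodeExt a) := by
  decide

lemma diodeDoorDiodeInv_trav : ∀ s a σ (i : Fin 5) l t l', diodeDoorDiodeInv s a σ (i, l) →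
    ooSCDTrav false (σ i, l) (t, l') → diodeDoorDiodeInv s a (update σ i t) (i, l') := by
  decide

lemma diodeDoorDiodeInv_move : ∀ s a σ (x y : Fin 5 × OOSCDLoc), diodeDoorDiodeInv s a σ x →
    (x, y) ∈ diodeDoorDiodeWires ∨ (y, x) ∈ diodeDoorDiodeWires →
    diodeDoorDiodeInv s a σ y := by
  decide

lemma diodeDoorDiodeInv_sound : ∀ s a s' b,
    diodeDoorDiodeInv s a (diodeDoorDiodeEnc s') (diodeDoorDiodeExt b) →
    (s, a) = (s', b) ∨ ooSCDTrav true (s, a) (s', b) := by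
  decide

lemma undirected_ooSCD_simulates_directed : Simulates (ooSCD false) (ooSCD true) := by
  refine Simulates.of_invariant (System.ofWires (ooSCD false) (Fin 5) diodeDoorDiodeWires)
    diodeDoorDiodeExt diodeDoorDiodeEnc diodeDoorDiodeExt_injective diodeDoorDiodeEnc_injective
    diodeDoorDiodeInv diodeDoorDiodeInv_init diodeDoorDiodeInv_trav diodeDoorDiodeInv_move
    diodeDoorDiodeInv_sound ?_
  rintro s a s' b (⟨rfl, h⟩ | ⟨rfl, rfl, h⟩ | ⟨⟨⟩, -⟩) <;> cases h
  · rw [← update_diodeDoorDiodeEnc s true]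
    exact .single (SysStep.trav_update (Or.inl ⟨rfl, rfl⟩))
  · have hd₁ : diodeWires (0 : Fin 5) 1 ⊆ diodeDoorDiodeWires := by decide
    have hd₂ : diodeWires (3 : Fin 5) 4 ⊆ diodeDoorDiodeWires := by decide
    exact (reach_through_diodeWires hd₁ rfl rfl).trans <|
      .head (.move (.inl (show ((1, T1), (2, T0)) ∈ diodeDoorDiodeWires by decide))) <|
      .head (sysStep_cross_door rfl (update_diodeDoorDiodeEnc true false)) <|
      .head (.move (.inl (show ((2, T1), (3, T0)) ∈ diodeDoorDiodeWires by decide))) <|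
      reach_through_diodeWires hd₂ rfl rfl

/-- The undirected open-optional normal self-closing door can simulate
a diode (two copies wired in series), and hence can simulate the directed open-optional
normal self-closing door. -/
theorem undirected_ooSCD_simulates_directed_ooSCD :
    Simulates (ooSCD false) diode ∧ Simulates (ooSCD false) (ooSCD true) :=
  ⟨undirected_ooSCD_simulates_diode, undirected_ooSCD_simulates_directed⟩
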